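/- arXiv:2510.27165 — 2 statements merged into one kernel-verified Lean document; each statement's English description precedes it below -/
import Mathlib

section
/- Suppose S, I, R : ℝ → Fin N → ℝ solve the network SIR system with A_ij ≥ 0, β, γ > 0, and componentwise positive initial data. Then S_i(t) ≥ 0, I_i(t) ≥ 0 and R_i(t) ≥ 0 for all t ≥ 0 and all i. -/
open scoped BigOperators
open Topology

/-- A continuous function with nonnegative derivative on the interior of `[0,a]`
is monotone there. -/
lemma mono_aux_stmt1 (f : ℝ → ℝ) (a : ℝ) (hc : Continuous f)
    (hd : ∀ s ∈ Set.Ioo (0:ℝ) a, ∃ d, HasDerivAt f d s ∧ 0 ≤ d) :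
    MonotoneOn f (Set.Icc 0 a) := by
  apply monotoneOn_of_deriv_nonneg (convex_Icc 0 a) hc.continuousOn
  · rw [interior_Icc]
    intro x hx
    obtain ⟨d, hdd, _⟩ := hd x hx
    exact hdd.differentiableAt.differentiableWithinAt
  · rw [interior_Icc]
    intro x hx
    obtain ⟨d, hdd, hdnn⟩ := hd x hx
    rwa [hdd.deriv]

theorem stmt_1 (N : ℕ) (A : Fin N → Fin N → ℝ) (hA : ∀ i j, 0 ≤ A i j)
    (β γ : ℝ) (hβ : 0 < β) (hγ : 0 < γ)
    (S I R : ℝ → Fin N → ℝ)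
    (hScont : ∀ i, Continuous (fun t => S t i))
    (hIcont : ∀ i, Continuous (fun t => I t i))
    (hRcont : ∀ i, Continuous (fun t => R t i))
    (hdS : ∀ t ≥ (0:ℝ), ∀ i,
      HasDerivAt (fun s => S s i) (-β * S t i * ∑ j, A i j * I t j) t)
    (hdI : ∀ t ≥ (0:ℝ), ∀ i,
      HasDerivAt (fun s => I s i) (β * S t i * ∑ j, A i j * I t j - γ * I t i) t)
    (hdR : ∀ t ≥ (0:ℝ), ∀ i,
      HasDerivAt (fun s => R s i) (γ * I t i) t)
    (hS0 : ∀ i, 0 < S 0 i) (hI0 : ∀ i, 0 < I 0 i) (hR0 : ∀ i, 0 < R 0 i) :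
    ∀ t ≥ (0:ℝ), ∀ i, 0 ≤ S t i ∧ 0 ≤ I t i ∧ 0 ≤ R t i := by
  -- Key claim: S and I are strictly positive for all t ≥ 0.
  have key : ∀ t ≥ (0:ℝ), ∀ i, 0 < S t i ∧ 0 < I t i := by
    intro T hT
    by_contra hbad
    push_neg at hbad
    -- Bad set
    set B : Set ℝ := Set.Icc 0 T ∩
      (⋃ i, ((fun t => S t i) ⁻¹' Set.Iic 0 ∪ (fun t => I t i) ⁻¹' Set.Iic 0)) with hBdef
    have hmemB : ∀ s, 0 ≤ s → s ≤ T → (∃ i, S s i ≤ 0 ∨ I s i ≤ 0) → s ∈ B := by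
      intro s hs hsT ⟨i, hi⟩
      refine ⟨⟨hs, hsT⟩, Set.mem_iUnion.2 ⟨i, ?_⟩⟩
      rcases hi with h | h
      · exact Or.inl h
      · exact Or.inr h
    have hBne : B.Nonempty := by
      obtain ⟨i, hi⟩ := hbad
      refine ⟨T, hmemB T hT le_rfl ⟨i, ?_⟩⟩
      by_cases h : 0 < S T i
      · exact Or.inr (hi h)
      · exact Or.inl (le_of_not_gt h)
    have hBclosed : IsClosed B := by
      apply isClosed_Icc.inter
      apply isClosed_iUnion_of_finite
      intro i
      exact ((isClosed_Iic.preimage (hScont i)).union (isClosed_Iic.preimage (hIcont i)))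
    have hBbdd : BddBelow B := ⟨0, fun x hx => hx.1.1⟩
    set t0 := sInf B with ht0def
    have ht0B : t0 ∈ B := hBclosed.csInf_mem hBne hBbdd
    have ht0nn : (0:ℝ) ≤ t0 := ht0B.1.1
    have ht0T : t0 ≤ T := ht0B.1.2
    -- positivity strictly before t0
    have hpos : ∀ s, 0 ≤ s → s < t0 → ∀ i, 0 < S s i ∧ 0 < I s i := by
      intro s hs hst0 i
      by_contra h
      push_neg at h
      have hsB : s ∈ B := by
        refine hmemB s hs (hst0.le.trans ht0T) ⟨i, ?_⟩
        by_cases h' : 0 < S s i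
        · exact Or.inr (h h')
        · exact Or.inl (le_of_not_gt h')
      exact absurd (csInf_le hBbdd hsB) (not_le.2 hst0)
    have ht0pos : 0 < t0 := by
      rcases ht0nn.lt_or_eq with h | h
      · exact h
      · exfalso
        obtain ⟨_, hU⟩ := ht0B
        rw [Set.mem_iUnion] at hU
        obtain ⟨i, hi⟩ := hU
        rcases hi with hi | hi <;> simp only [Set.mem_preimage, Set.mem_Iic, ← h] at hi
        · exact absurd hi (not_le.2 (hS0 i))
        · exact absurd hi (not_le.2 (hI0 i))
    -- nonnegativity on [0, t0]
    have hnnS : ∀ s ∈ Set.Icc (0:ℝ) t0, ∀ i, 0 ≤ S s i := by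
      rintro s ⟨hs0, hst0⟩ i
      rcases hst0.lt_or_eq with h | h
      · exact (hpos s hs0 h i).1.le
      · have hspos : 0 < s := h ▸ ht0pos
        have hne : (𝓝[Set.Ioo 0 s] s).NeBot := right_nhdsWithin_Ioo_neBot hspos
        refine ge_of_tendsto (((hScont i).tendsto s).mono_left
          (nhdsWithin_le_nhds (s := Set.Ioo 0 s))) ?_
        filter_upwards [self_mem_nhdsWithin] with u hu
        exact (hpos u hu.1.le (h ▸ hu.2) i).1.le
    have hnnI : ∀ s ∈ Set.Icc (0:ℝ) t0, ∀ i, 0 ≤ I s i := by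
      rintro s ⟨hs0, hst0⟩ i
      rcases hst0.lt_or_eq with h | h
      · exact (hpos s hs0 h i).2.le
      · have hspos : 0 < s := h ▸ ht0pos
        have hne : (𝓝[Set.Ioo 0 s] s).NeBot := right_nhdsWithin_Ioo_neBot hspos
        refine ge_of_tendsto (((hIcont i).tendsto s).mono_left
          (nhdsWithin_le_nhds (s := Set.Ioo 0 s))) ?_
        filter_upwards [self_mem_nhdsWithin] with u hu
        exact (hpos u hu.1.le (h ▸ hu.2) i).2.le
    have hsumnn : ∀ s ∈ Set.Icc (0:ℝ) t0, ∀ i, 0 ≤ ∑ j, A i j * I s j := by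
      intro s hs i
      exact Finset.sum_nonneg fun j _ => mul_nonneg (hA i j) (hnnI s hs j)
    -- I is positive at t0
    have hIt0 : ∀ i, 0 < I t0 i := by
      intro i
      have hmono : MonotoneOn (fun s => I s i * Real.exp (γ * s)) (Set.Icc 0 t0) := by
        apply mono_aux_stmt1
        · exact (hIcont i).mul (Real.continuous_exp.comp (continuous_const.mul continuous_id))
        · intro s hs
          have hIoo : s ∈ Set.Icc (0:ℝ) t0 := ⟨hs.1.le, hs.2.le⟩
          have hde : HasDerivAt (fun u => Real.exp (γ * u)) (Real.exp (γ * s) * γ) s := by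
            simpa using (HasDerivAt.exp ((hasDerivAt_id s).const_mul γ))
          refine ⟨_, (hdI s hs.1.le i).mul hde, ?_⟩
          have h1 : 0 ≤ S s i := hnnS s hIoo i
          have h2 : 0 ≤ I s i := hnnI s hIoo i
          have h3 : 0 ≤ ∑ j, A i j * I s j := hsumnn s hIoo i
          have he : 0 < Real.exp (γ * s) := Real.exp_pos _
          nlinarith [mul_nonneg (mul_nonneg hβ.le h1) h3]
      have h := hmono (Set.left_mem_Icc.2 ht0nn) (Set.right_mem_Icc.2 ht0nn) ht0nn
      simp only [mul_zero, Real.exp_zero, mul_one] at h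
      have h0 : 0 < I t0 i * Real.exp (γ * t0) := lt_of_lt_of_le (hI0 i) h
      have he : 0 < Real.exp (γ * t0) := Real.exp_pos _
      nlinarith
    -- S is positive at t0
    have hSt0 : ∀ i, 0 < S t0 i := by
      intro i
      obtain ⟨M, hM⟩ : ∃ M, ∀ s ∈ Set.Icc (0:ℝ) t0, ∑ j, A i j * I s j ≤ M := by
        obtain ⟨C, hC⟩ := (isCompact_Icc (a := (0:ℝ)) (b := t0)).exists_bound_of_continuousOn
          (f := fun s => ∑ j, A i j * I s j)
          ((continuous_finset_sum _ fun j _ => (continuous_const.mul (hIcont j))).continuousOn)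
        exact ⟨C, fun s hs => (le_abs_self _).trans (by simpa using hC s hs)⟩
      have hmono : MonotoneOn (fun s => S s i * Real.exp (β * M * s)) (Set.Icc 0 t0) := by
        apply mono_aux_stmt1
        · exact (hScont i).mul (Real.continuous_exp.comp (continuous_const.mul continuous_id))
        · intro s hs
          have hIoo : s ∈ Set.Icc (0:ℝ) t0 := ⟨hs.1.le, hs.2.le⟩
          have hde : HasDerivAt (fun u => Real.exp (β * M * u)) (Real.exp (β * M * s) * (β * M)) s := by
            simpa using (HasDerivAt.exp ((hasDerivAt_id s).const_mul (β * M)))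
          refine ⟨_, (hdS s hs.1.le i).mul hde, ?_⟩
          have h1 : 0 ≤ S s i := hnnS s hIoo i
          have h3 : ∑ j, A i j * I s j ≤ M := hM s hIoo
          have he : 0 < Real.exp (β * M * s) := Real.exp_pos _
          nlinarith [mul_nonneg (mul_nonneg hβ.le h1) (sub_nonneg.2 h3)]
      have h := hmono (Set.left_mem_Icc.2 ht0nn) (Set.right_mem_Icc.2 ht0nn) ht0nn
      simp only [mul_zero, Real.exp_zero, mul_one] at h
      have h0 : 0 < S t0 i * Real.exp (β * M * t0) := lt_of_lt_of_le (hS0 i) h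
      have he : 0 < Real.exp (β * M * t0) := Real.exp_pos _
      nlinarith
    -- contradiction with t0 ∈ B
    obtain ⟨_, hU⟩ := ht0B
    rw [Set.mem_iUnion] at hU
    obtain ⟨i, hi⟩ := hU
    rcases hi with hi | hi <;> simp only [Set.mem_preimage, Set.mem_Iic] at hi
    · exact absurd hi (not_le.2 (hSt0 i))
    · exact absurd hi (not_le.2 (hIt0 i))
  -- conclude
  intro t ht i
  refine ⟨(key t ht i).1.le, (key t ht i).2.le, ?_⟩
  have hmono : MonotoneOn (fun s => R s i) (Set.Icc 0 t) := by
    apply mono_aux_stmt1 _ _ (hRcont i)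
    intro s hs
    exact ⟨_, hdR s hs.1.le i, mul_nonneg hγ.le (key s hs.1.le i).2.le⟩
  have := hmono (Set.left_mem_Icc.2 ht) (Set.right_mem_Icc.2 ht) ht
  exact le_trans (hR0 i).le this
end

section
/- Suppose I : [0,T] → ℝ^N is differentiable with I(t) componentwise nonnegative, and I'(t) ≤ M I(t) componentwise where M = β₀A - γ₀·Id with A nonnegative symmetric and β₀ρ(A) < γ₀. Then ‖I(t)‖ ≤ ‖I(0)‖·e^{(β₀ρ(A) - γ₀)t} for all t ∈ [0,T], where ‖·‖ is the Euclidean norm. -/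
/-!
Let `f(t) = ‖I(t)‖²`. Since `I ≥ 0` componentwise, multiplying `I' ≤ M I` by `I` and summing gives
`f'/2 = I ⬝ I' ≤ I ⬝ M I = β₀ (I ⬝ A I) - γ₀ f`, and for symmetric `A` the Rayleigh quotient
`I ⬝ A I / f` is at most the largest eigenvalue of `A`, hence at most `ρ(A)`. So
`f' ≤ 2 (β₀ ρ(A) - γ₀) f`, and Grönwall's inequality gives `f(t) ≤ f(0) e^{2 (β₀ ρ(A) - γ₀) t}`.
-/

open scoped BigOperators

/-- The spectral radius of a real square matrix: the supremum of `|λ|` over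
complex eigenvalues `λ` of the matrix. -/
noncomputable def specRad {N : ℕ} (M : Matrix (Fin N) (Fin N) ℝ) : ℝ :=
  sSup {r : ℝ | ∃ (μ : ℂ) (v : Fin N → ℂ), v ≠ 0 ∧
    (M.map (Complex.ofReal)).mulVec v = μ • v ∧ r = ‖μ‖}

open Matrix Module.End Set Real

theorem hasDerivAt_dotProduct_self {n : Type*} [Fintype n] {x : ℝ → n → ℝ} {x' : n → ℝ} {t : ℝ}
    (hx : HasDerivAt x x' t) : HasDerivAt (fun s => x s ⬝ᵥ x s) (2 * (x t ⬝ᵥ x')) t := by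
  have hxi := hasDerivAt_pi.mp hx
  refine (HasDerivAt.fun_sum fun i _ => (hxi i).fun_mul (hxi i)).congr_deriv ?_
  simp only [dotProduct, Finset.mul_sum]
  exact Finset.sum_congr rfl fun i _ => by ring

theorem le_mul_exp_of_hasDerivWithinAt_le {f f' : ℝ → ℝ} {K a b : ℝ}
    (hf : ContinuousOn f (Icc a b)) (hf' : ∀ x ∈ Ico a b, HasDerivWithinAt f (f' x) (Ici x) x)
    (bound : ∀ x ∈ Ico a b, f' x ≤ K * f x) :
    ∀ x ∈ Icc a b, f x ≤ f a * exp (K * (x - a)) := by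
  simpa [gronwallBound_ε0] using le_gronwallBound_of_liminf_deriv_right_le hf
    (fun x hx _ hr => (hf' x hx).liminf_right_slope_le hr) le_rfl
    (K := K) (ε := 0) (by simpa using bound)

theorem LinearMap.IsSymmetric.inner_apply_self_le {E : Type*} [NormedAddCommGroup E]
    [InnerProductSpace ℝ E] [FiniteDimensional ℝ E] {T : E →ₗ[ℝ] E} (hT : T.IsSymmetric)
    {c : ℝ} (hc : ∀ μ, HasEigenvalue T μ → μ ≤ c) (x : E) :
    inner ℝ (T x) x ≤ c * ‖x‖ ^ 2 := by
  set b := hT.eigenvectorBasis rfl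
  have key : inner ℝ (T x) x = ∑ i, hT.eigenvalues rfl i * b.repr x i ^ 2 := by
    rw [← b.repr.inner_map_map, PiLp.inner_apply]
    simp only [hT.eigenvectorBasis_apply_self_apply, ringHom_apply, RCLike.inner_apply, b]
    exact Finset.sum_congr rfl fun i _ => by ring
  simp_rw [key, ← b.repr.norm_map, EuclideanSpace.norm_sq_eq, Real.norm_eq_abs, sq_abs,
    Finset.mul_sum]
  gcongr with i
  simpa using hc _ (hT.hasEigenvalue_eigenvalues rfl i)

open scoped Matrix.Norms.Operator in
theorem bddAbove_specRad_set {N : ℕ} (A : Matrix (Fin N) (Fin N) ℝ) :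
    BddAbove {r : ℝ | ∃ (μ : ℂ) (v : Fin N → ℂ), v ≠ 0 ∧
      (A.map Complex.ofReal) *ᵥ v = μ • v ∧ r = ‖μ‖} := by
  refine ⟨‖A.map Complex.ofReal‖, ?_⟩
  rintro r ⟨μ, v, hv, hev, rfl⟩
  have hv : 0 < ‖v‖ := norm_pos_iff.mpr hv
  refine le_of_mul_le_mul_right ?_ hv
  calc ‖μ‖ * ‖v‖ = ‖A.map Complex.ofReal *ᵥ v‖ := by rw [hev, norm_smul]
    _ ≤ ‖A.map Complex.ofReal‖ * ‖v‖ := linfty_opNorm_mulVec _ _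

theorem le_specRad_of_hasEigenvalue {N : ℕ} {A : Matrix (Fin N) (Fin N) ℝ} {μ : ℝ}
    (hμ : HasEigenvalue (toEuclideanLin A) μ) : μ ≤ specRad A := by
  obtain ⟨v, hv⟩ := hμ.exists_hasEigenvector
  refine (le_abs_self μ).trans (le_csSup (bddAbove_specRad_set A)
    ⟨μ, fun i => (v i : ℂ), ?_, ?_, by simp⟩)
  · intro h
    exact hv.2 (by ext i; simpa using congrFun h i)
  · have hAv : A *ᵥ v.ofLp = μ • v.ofLp := by
      simpa using congrArg WithLp.ofLp hv.apply_eq_smul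
    ext i
    refine (Complex.ofRealHom.map_mulVec A v.ofLp i).symm.trans ?_
    simp [hAv]

theorem Matrix.IsSymm.dotProduct_mulVec_le_specRad_mul {N : ℕ} {A : Matrix (Fin N) (Fin N) ℝ}
    (hA : A.IsSymm) (x : Fin N → ℝ) : x ⬝ᵥ A *ᵥ x ≤ specRad A * (x ⬝ᵥ x) := by
  have hT : (toEuclideanLin A).IsSymmetric :=
    isSymmetric_toEuclideanLin_iff.mpr (isHermitian_iff_isSymm.mpr hA)
  have := hT.inner_apply_self_le (fun μ => le_specRad_of_hasEigenvalue) (WithLp.toLp 2 x)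
  rw [← real_inner_self_eq_norm_sq, EuclideanSpace.inner_eq_star_dotProduct,
    EuclideanSpace.inner_eq_star_dotProduct] at this
  simpa [dotProduct_comm] using this

theorem dotProduct_le_mul_dotProduct_self_of_le_mulVec {N : ℕ} {A : Matrix (Fin N) (Fin N) ℝ}
    (hA : A.IsSymm) {β γ : ℝ} (hβ : 0 ≤ β) {x y : Fin N → ℝ} (hx : 0 ≤ x)
    (hy : y ≤ (β • A - γ • 1) *ᵥ x) : x ⬝ᵥ y ≤ (β * specRad A - γ) * (x ⬝ᵥ x) :=
  calc x ⬝ᵥ y ≤ x ⬝ᵥ (β • A - γ • 1) *ᵥ x := dotProduct_le_dotProduct_of_nonneg_left hy hx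
    _ = β * (x ⬝ᵥ A *ᵥ x) - γ * (x ⬝ᵥ x) := by
      simp [sub_mulVec, smul_mulVec, dotProduct_sub]
    _ ≤ (β * specRad A - γ) * (x ⬝ᵥ x) := by
      nlinarith [mul_le_mul_of_nonneg_left (hA.dotProduct_mulVec_le_specRad_mul x) hβ]

theorem stmt_9_general (N : ℕ) (T : ℝ)
    (A : Matrix (Fin N) (Fin N) ℝ) (hAsymm : A.IsSymm)
    (β₀ γ₀ : ℝ) (hβ : 0 < β₀)
    (I : ℝ → Fin N → ℝ)
    (hdiff : ∀ i, Differentiable ℝ (fun t => I t i))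
    (hnonneg : ∀ t ∈ Set.Icc 0 T, ∀ i, 0 ≤ I t i)
    (hineq : ∀ t ∈ Set.Icc 0 T, ∀ i,
      deriv (fun s => I s i) t ≤
        ∑ j, (β₀ • A - γ₀ • (1 : Matrix (Fin N) (Fin N) ℝ)) i j * I t j) :
    ∀ t ∈ Set.Icc 0 T,
      Real.sqrt (∑ i, (I t i) ^ 2) ≤
        Real.sqrt (∑ i, (I 0 i) ^ 2) * Real.exp ((β₀ * specRad A - γ₀) * t) := by
  intro t ht
  set c := β₀ * specRad A - γ₀
  set I' : ℝ → Fin N → ℝ := fun s i => deriv (fun u => I u i) s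
  have hI : ∀ s, HasDerivAt I (I' s) s := fun s =>
    hasDerivAt_pi.mpr fun i => (hdiff i s).hasDerivAt
  have hgrowth : ∀ s ∈ Ico 0 T, 2 * (I s ⬝ᵥ I' s) ≤ 2 * c * (I s ⬝ᵥ I s) := fun s hs => by
    have := dotProduct_le_mul_dotProduct_self_of_le_mulVec hAsymm hβ.le
      (hnonneg s (Ico_subset_Icc_self hs)) (hineq s (Ico_subset_Icc_self hs))
    linarith
  have henergy := le_mul_exp_of_hasDerivWithinAt_le
    (fun s _ => (hasDerivAt_dotProduct_self (hI s)).continuousAt.continuousWithinAt)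
    (fun s _ => (hasDerivAt_dotProduct_self (hI s)).hasDerivWithinAt) hgrowth t ht
  have hsq : ∀ s, ∑ i, I s i ^ 2 = I s ⬝ᵥ I s := fun s => by simp [dotProduct, sq]
  rw [Real.sqrt_le_iff, mul_pow, Real.sq_sqrt (by positivity), ← Real.exp_nat_mul, hsq, hsq]
  refine ⟨by positivity, ?_⟩
  convert henergy using 3
  ring

theorem stmt_9 (N : ℕ) (T : ℝ) (hT : 0 < T)
    (A : Matrix (Fin N) (Fin N) ℝ) (hA : ∀ i j, 0 ≤ A i j) (hAsymm : A.IsSymm)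
    (β₀ γ₀ : ℝ) (hβ : 0 < β₀) (hγ : 0 < γ₀) (hsub : β₀ * specRad A < γ₀)
    (I : ℝ → Fin N → ℝ)
    (hdiff : ∀ i, Differentiable ℝ (fun t => I t i))
    (hnonneg : ∀ t ∈ Set.Icc 0 T, ∀ i, 0 ≤ I t i)
    (hineq : ∀ t ∈ Set.Icc 0 T, ∀ i,
      deriv (fun s => I s i) t ≤
        ∑ j, (β₀ • A - γ₀ • (1 : Matrix (Fin N) (Fin N) ℝ)) i j * I t j) :
    ∀ t ∈ Set.Icc 0 T,
      Real.sqrt (∑ i, (I t i) ^ 2) ≤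
        Real.sqrt (∑ i, (I 0 i) ^ 2) * Real.exp ((β₀ * specRad A - γ₀) * t) :=
  stmt_9_general N T A hAsymm β₀ γ₀ hβ I hdiff hnonneg hineq
end
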